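/- Let p0 ∈ ℝ, D : ℝ → ℝ, and D0, D1 : ℝ × ℝ → ℝ. Suppose D1 is (Fréchet) differentiable at (p0, p0), D1(p, p) = D(p) for all p, x ↦ D1(x, y) is nondecreasing for each y, y ↦ D0(x, y) is nondecreasing for each x, and ∂D0/∂y exists at (p0, p0). Then D is differentiable at p0 and the naive demand estimator underestimates the demand treatment effect: ∂D1/∂y(p0, p0) − ∂D0/∂y(p0, p0) ≤ D'(p0). -/

import Mathlib

/-! By the chain rule along the diagonal, `D'(p₀) = ∂ₓD₁ + ∂_yD₁` at `(p₀, p₀)`. Monotonicity makes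
`∂ₓD₁ ≥ 0` and `∂_yD₀ ≥ 0`, so `∂_yD₁ - ∂_yD₀ ≤ ∂_yD₁ ≤ D'(p₀)`. -/

open Filter Topology

section PartialDerivatives

variable {𝕜 F : Type*} [NontriviallyNormedField 𝕜] [NormedAddCommGroup F] [NormedSpace 𝕜 F]
  {f : 𝕜 × 𝕜 → F} {L : 𝕜 × 𝕜 →L[𝕜] F} {x y : 𝕜}

theorem HasFDerivAt.hasDerivAt_diag (hf : HasFDerivAt f L (x, x)) :
    HasDerivAt (fun p => f (p, p)) (L (1, 1)) x :=
  hf.comp_hasDerivAt (f := fun p => (p, p)) x ((hasDerivAt_id' x).prodMk (hasDerivAt_id' x))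

theorem HasFDerivAt.hasDerivAt_partial_fst (hf : HasFDerivAt f L (x, y)) :
    HasDerivAt (fun p => f (p, y)) (L (1, 0)) x :=
  hf.comp_hasDerivAt (f := fun p => (p, y)) x ((hasDerivAt_id' x).prodMk (hasDerivAt_const x y))

theorem ContinuousLinearMap.apply_one_one_eq_add (L : 𝕜 × 𝕜 →L[𝕜] F) :
    L (1, 1) = L (1, 0) + L (0, 1) := by
  rw [← map_add, Prod.mk_add_mk, add_zero, zero_add]

end PartialDerivatives

/-- the naive demand estimator underestimates the demand
treatment effect. -/
theorem naive_demand_estimator_underestimates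
    (p0 : ℝ) (D : ℝ → ℝ) (D0 D1 : ℝ × ℝ → ℝ)
    (L : ℝ × ℝ →L[ℝ] ℝ) (d0y : ℝ)
    (hD1 : HasFDerivAt D1 L (p0, p0))
    (hdiag : ∀ p : ℝ, D1 (p, p) = D p)
    (hmono1 : ∀ y : ℝ, Monotone (fun x => D1 (x, y)))
    (hmono0 : ∀ x : ℝ, Monotone (fun y => D0 (x, y)))
    (hD0 : HasDerivAt (fun y => D0 (p0, y)) d0y p0) :
    DifferentiableAt ℝ D p0 ∧ L (0, 1) - d0y ≤ deriv D p0 := by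
  have hD : HasDerivAt D (L (1, 1)) p0 := by simpa only [hdiag] using hD1.hasDerivAt_diag
  have hD1x : 0 ≤ L (1, 0) := hD1.hasDerivAt_partial_fst.nonneg_of_monotone (hmono1 p0)
  have hD0y : 0 ≤ d0y := hD0.nonneg_of_monotone (hmono0 p0)
  refine ⟨hD.differentiableAt, ?_⟩
  calc L (0, 1) - d0y ≤ L (1, 0) + L (0, 1) := by linarith
    _ = deriv D p0 := by rw [hD.deriv, L.apply_one_one_eq_add]
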